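/- If gcd(m, ℓ) = 1, then the quotient B_n/B_n[mℓ] is isomorphic to the product B_n/B_n[m] × B_n/B_n[ℓ]. -/

import Mathlib

open Matrix FreeGroup

/-- The braid relations on `n` strands, with Artin generators indexed by `Fin (n-1)`. -/
def braidRels (n : ℕ) : Set (FreeGroup (Fin (n - 1))) :=
  {r | (∃ i j : Fin (n - 1), (i : ℕ) + 1 = (j : ℕ) ∧
          r = of i * of j * of i * (of j * of i * of j)⁻¹) ∨
       (∃ i j : Fin (n - 1), (i : ℕ) + 2 ≤ (j : ℕ) ∧
          r = of i * of j * (of j * of i)⁻¹)}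

/-- The braid group on `n` strands, as a presented group. -/
def BraidGroup (n : ℕ) : Type := PresentedGroup (braidRels n)

instance (n : ℕ) : Group (BraidGroup n) := by unfold BraidGroup; infer_instance

/-- The Artin generator `σ_{i+1}` of the braid group on `n` strands. -/
def σ {n : ℕ} (i : Fin (n - 1)) : BraidGroup n := PresentedGroup.of i

/-- The integral Burau matrix of the Artin generator `σ_{i+1}` (rows and columns `i`, `i+1`
in 0-indexed notation): the identity matrix with the block `[[2, -1], [1, 0]]` inserted. -/
def burauMat (n : ℕ) (i : ℕ) : Matrix (Fin n) (Fin n) ℤ :=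
  Matrix.of fun j k =>
    if (j : ℕ) = i ∧ (k : ℕ) = i then 2
    else if (j : ℕ) = i ∧ (k : ℕ) = i + 1 then -1
    else if (j : ℕ) = i + 1 ∧ (k : ℕ) = i then 1
    else if (j : ℕ) = i + 1 ∧ (k : ℕ) = i + 1 then 0
    else if j = k then 1 else 0

/-- `IsBurau ρ` asserts that `ρ` is the integral Burau representation (Burau at `t = -1`). -/
def IsBurau {n : ℕ} (ρ : BraidGroup n →* Matrix.GeneralLinearGroup (Fin n) ℤ) : Prop :=
  ∀ i : Fin (n - 1), (ρ (σ i) : Matrix (Fin n) (Fin n) ℤ) = burauMat n (i : ℕ)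

/-- Reduction modulo `ℓ` on `GL(n, ℤ)`. -/
def glMod (n ℓ : ℕ) :
    Matrix.GeneralLinearGroup (Fin n) ℤ →* Matrix.GeneralLinearGroup (Fin n) (ZMod ℓ) :=
  Units.map ((Int.castRingHom (ZMod ℓ)).mapMatrix.toMonoidHom)

/-- The level-`ℓ` congruence subgroup `B_n[ℓ]` of the braid group: the kernel of the
integral Burau representation reduced mod `ℓ`. -/
def braidCong {n : ℕ} (ρ : BraidGroup n →* Matrix.GeneralLinearGroup (Fin n) ℤ) (ℓ : ℕ) :
    Subgroup (BraidGroup n) :=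
  ((glMod n ℓ).comp ρ).ker

instance braidCong_normal {n : ℕ} (ρ : BraidGroup n →* Matrix.GeneralLinearGroup (Fin n) ℤ)
    (ℓ : ℕ) : (braidCong ρ ℓ).Normal :=
  MonoidHom.normal_ker _

/-!
An integer matrix is `≡ 1` modulo `mℓ` iff it is so modulo `m` and modulo `ℓ`, so
`B_n[m] ∩ B_n[ℓ] = B_n[mℓ]`.
The Burau matrix of a generator is `1 + N` with `N` of rank one and `N² = 0`, so `σᵢ^ℓ` acts
as `1 + ℓN` and lies in `B_n[ℓ]`. Writing `1 = am + bℓ` gives `σᵢ = (σᵢ^m)^a (σᵢ^ℓ)^b`, so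
`B_n[m] B_n[ℓ] = B_n`, and the Chinese remainder theorem for normal subgroups applies.
-/

namespace QuotientGroup

variable {G : Type*} [Group G]

theorem prod_mk'_surjective_of_sup_eq_top {M N : Subgroup G} [M.Normal] [N.Normal]
    (h : M ⊔ N = ⊤) : Function.Surjective ((mk' M).prod (mk' N)) := by
  rintro ⟨x, y⟩
  obtain ⟨a, rfl⟩ := mk'_surjective M x
  obtain ⟨b, rfl⟩ := mk'_surjective N y
  obtain ⟨u, hu, v, hv, huv⟩ :=
    Subgroup.mem_sup_of_normal_right.mp (h ▸ Subgroup.mem_top (a⁻¹ * b) : a⁻¹ * b ∈ M ⊔ N)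
  have hb : a * u = b * v⁻¹ := by
    rw [eq_mul_inv_iff_mul_eq, mul_assoc, huv, mul_inv_cancel_left]
  refine ⟨a * u, Prod.ext ?_ ?_⟩
  · simpa [QuotientGroup.eq] using M.inv_mem hu
  · simpa [hb, QuotientGroup.eq] using hv

noncomputable def quotientInfEquivProdOfSupEqTop (M N : Subgroup G) [M.Normal] [N.Normal]
    (h : M ⊔ N = ⊤) : G ⧸ (M ⊓ N) ≃* (G ⧸ M) × (G ⧸ N) :=
  (quotientMulEquivOfEq (by rw [MonoidHom.ker_prod, ker_mk', ker_mk'])).trans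
    (quotientKerEquivOfSurjective _ (prod_mk'_surjective_of_sup_eq_top h))

end QuotientGroup

theorem Subgroup.mem_sup_of_pow_mem_of_coprime {G : Type*} [Group G] {H K : Subgroup G}
    {g : G} {m ℓ : ℕ} (h : m.Coprime ℓ) (hm : g ^ m ∈ H) (hℓ : g ^ ℓ ∈ K) : g ∈ H ⊔ K := by
  have hg : g = (g ^ m) ^ Nat.gcdA m ℓ * (g ^ ℓ) ^ Nat.gcdB m ℓ := by
    rw [← zpow_natCast, ← zpow_natCast, ← _root_.zpow_mul, ← _root_.zpow_mul, ← _root_.zpow_add,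
      ← Nat.gcd_eq_gcd_ab, h, Nat.cast_one, zpow_one]
  rw [hg]
  exact mul_mem (mem_sup_left (zpow_mem hm _)) (mem_sup_right (zpow_mem hℓ _))

theorem one_add_pow_of_mul_self_eq_zero {R : Type*} [Ring R] {e : R} (he : e * e = 0)
    (k : ℕ) : (1 + e) ^ k = 1 + k • e := by
  induction k with
  | zero => simp
  | succ k ih =>
    rw [pow_succ, ih, succ_nsmul]
    calc (1 + k • e) * (1 + e) = 1 + (k • e + e) + k • (e * e) := by noncomm_ring
      _ = 1 + (k • e + e) := by rw [he, smul_zero, add_zero]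

theorem mem_ker_glMod_iff {n ℓ : ℕ} {A : Matrix.GeneralLinearGroup (Fin n) ℤ} :
    A ∈ (glMod n ℓ).ker ↔
      ∀ j k, (A : Matrix (Fin n) (Fin n) ℤ) j k ≡ (1 : Matrix (Fin n) (Fin n) ℤ) j k [ZMOD ℓ] := by
  simp only [MonoidHom.mem_ker, Units.ext_iff, Units.val_one, ← Matrix.ext_iff,
    ← ZMod.intCast_eq_intCast_iff]
  refine forall₂_congr fun j k => ?_
  rw [Matrix.one_apply, Matrix.one_apply]
  split_ifs <;> simp [glMod]

theorem ker_glMod_inf_ker_glMod {n m ℓ : ℕ} (h : m.Coprime ℓ) :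
    (glMod n m).ker ⊓ (glMod n ℓ).ker = (glMod n (m * ℓ)).ker := by
  have hco : (m : ℤ).natAbs.Coprime (ℓ : ℤ).natAbs := by simpa using h
  ext A
  simp only [Subgroup.mem_inf, mem_ker_glMod_iff, Nat.cast_mul,
    ← Int.modEq_and_modEq_iff_modEq_mul hco, forall_and]

theorem braidCong_inf_braidCong {n m ℓ : ℕ}
    (ρ : BraidGroup n →* Matrix.GeneralLinearGroup (Fin n) ℤ) (h : m.Coprime ℓ) :
    braidCong ρ m ⊓ braidCong ρ ℓ = braidCong ρ (m * ℓ) := by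
  simp only [braidCong, ← MonoidHom.comap_ker, ← Subgroup.comap_inf, ker_glMod_inf_ker_glMod h]

theorem burauMat_eq_one_add_vecMulVec {n i : ℕ} (h : i + 1 < n) :
    burauMat n i = 1 + vecMulVec (Pi.single ⟨i, by omega⟩ 1 + Pi.single ⟨i + 1, h⟩ 1)
      (Pi.single ⟨i, by omega⟩ 1 - Pi.single ⟨i + 1, h⟩ 1) := by
  ext j k
  simp only [burauMat, of_apply, Matrix.add_apply, one_apply, vecMulVec_apply, Pi.add_apply,
    Pi.sub_apply, Pi.single_apply, Fin.ext_iff]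
  split_ifs <;> omega

theorem burauMat_pow {n i : ℕ} (h : i + 1 < n) (k : ℕ) :
    burauMat n i ^ k = 1 + k • (burauMat n i - 1) := by
  have hsq : (burauMat n i - 1) * (burauMat n i - 1) = 0 := by
    rw [burauMat_eq_one_add_vecMulVec h, add_sub_cancel_left, vecMulVec_mul_vecMulVec,
      dotProduct_add, dotProduct_single, dotProduct_single]
    simp [Fin.ext_iff]
  simpa using one_add_pow_of_mul_self_eq_zero hsq k

theorem σ_pow_mem_braidCong {n : ℕ} {ρ : BraidGroup n →* Matrix.GeneralLinearGroup (Fin n) ℤ}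
    (hρ : IsBurau ρ) (ℓ : ℕ) (i : Fin (n - 1)) : σ i ^ ℓ ∈ braidCong ρ ℓ := by
  rw [braidCong, ← MonoidHom.comap_ker, Subgroup.mem_comap, mem_ker_glMod_iff, map_pow,
    Units.val_pow_eq_pow_val, hρ i, burauMat_pow (by omega)]
  intro j k
  rw [Matrix.add_apply, Matrix.smul_apply, nsmul_eq_mul]
  exact Int.modEq_add_fac_self

theorem closure_range_σ (n : ℕ) :
    Subgroup.closure (Set.range (σ : Fin (n - 1) → BraidGroup n)) = ⊤ :=
  PresentedGroup.closure_range_of _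

theorem braidCong_sup_braidCong {n m ℓ : ℕ}
    {ρ : BraidGroup n →* Matrix.GeneralLinearGroup (Fin n) ℤ} (hρ : IsBurau ρ)
    (h : m.Coprime ℓ) : braidCong ρ m ⊔ braidCong ρ ℓ = ⊤ := by
  rw [eq_top_iff, ← closure_range_σ, Subgroup.closure_le]
  rintro _ ⟨i, rfl⟩
  exact Subgroup.mem_sup_of_pow_mem_of_coprime h (σ_pow_mem_braidCong hρ m i)
    (σ_pow_mem_braidCong hρ ℓ i)

theorem braidQuotient_coprime_iso_general {n : ℕ}
    (ρ : BraidGroup n →* Matrix.GeneralLinearGroup (Fin n) ℤ) (hρ : IsBurau ρ)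
    (m ℓ : ℕ) (h : Nat.gcd m ℓ = 1) :
    Nonempty
      ((BraidGroup n ⧸ braidCong ρ (m * ℓ)) ≃*
        (BraidGroup n ⧸ braidCong ρ m) × (BraidGroup n ⧸ braidCong ρ ℓ)) :=
  ⟨(QuotientGroup.quotientMulEquivOfEq (braidCong_inf_braidCong ρ h).symm).trans
    (QuotientGroup.quotientInfEquivProdOfSupEqTop _ _ (braidCong_sup_braidCong hρ h))⟩

theorem braidQuotient_coprime_iso {n : ℕ}
    (ρ : BraidGroup n →* Matrix.GeneralLinearGroup (Fin n) ℤ) (hρ : IsBurau ρ)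
    (m ℓ : ℕ) (hm : 0 < m) (hℓ : 0 < ℓ) (h : Nat.gcd m ℓ = 1) :
    Nonempty
      ((BraidGroup n ⧸ braidCong ρ (m * ℓ)) ≃*
        (BraidGroup n ⧸ braidCong ρ m) × (BraidGroup n ⧸ braidCong ρ ℓ)) :=
  braidQuotient_coprime_iso_general ρ hρ m ℓ h
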